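/- arXiv:1408.6580 — 5 statements merged into one kernel-verified Lean document; each statement's English description precedes it below -/
import Mathlib

section
/- Suppose the weight data satisfy the Li identities. Then for every k ∈ {0, …, n−1}, the number of times the weight a occurs at points of index k equals the number of times the weight −a occurs at points of index k+1; that is, ∑_{p ∈ P, λ_p = k} ν_p(a) = ∑_{p ∈ P, λ_p = k+1} ν_p(−a). (This is the combinatorial core of Proposition 2.2: for a circle action on a closed almost complex manifold with isolated fixed points, the weight data at the fixed points satisfy the Li identities by P. Li's theorem, and after reversing the action one may assume all weights have absolute value at least the smallest positive weight a.) -/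
/-!
Expand the `k`-th Li identity in Laurent series at `t = 0` and compare the coefficients of
`t^a`. Modulo `t^(a+1)`, where `ε = t^a` satisfies `ε² = 0`, the factor `1/(1 - t^w)` is
`1 + [w = a] ε` for `w > 0` and `-[w = -a] ε` for `w < 0`, so each summand
`e_k(t^w)/∏(1 - t^w)` reduces to a first-order expansion. Its `ε`-coefficient is
`(-1)^k (D_k - D_(k-1))`, where `D_k = ν(a)[λ = k] - ν(-a)[λ = k + 1]`. The right-hand side of
the identity is constant, so the sums of `D_k` over the points satisfy
`D_k = D_(k-1) = … = D_(-1) = 0`.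
-/

open Finset PowerSeries HahnSeries
open scoped LaurentSeries

section Algebra

variable {R : Type*}

theorem eq_one_add_of_one_sub_mul_eq_one [CommRing R] {y z : R} (hy : y ^ 2 = 0)
    (h : (1 - y) * z = 1) : z = 1 + y := by
  linear_combination (1 + y) * h + z * hy

theorem inv_one_sub_inv_eq_one_sub [Field R] {y z : R} (hy : y ≠ 0) (h : (1 - y) * z = 1) :
    (1 - y⁻¹)⁻¹ = 1 - z := by
  refine inv_eq_of_mul_eq_one_right ?_
  field_simp
  linear_combination h

theorem Finset.prod_add_mul_of_sq_eq_zero [CommSemiring R] {ι : Type*} [DecidableEq ι]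
    {ε : R} (hε : ε ^ 2 = 0) (s : Finset ι) (c d : ι → R) :
    ∏ i ∈ s, (c i + d i * ε) = ∏ i ∈ s, c i + (∑ i ∈ s, d i * ∏ j ∈ s.erase i, c j) * ε := by
  induction s using Finset.induction_on with
  | empty => simp
  | insert x s hx ih =>
    have herase : ∀ i ∈ s,
        ∏ j ∈ (insert x s).erase i, c j = c x * ∏ j ∈ s.erase i, c j := fun i hi => by
        rw [erase_insert_of_ne (ne_of_mem_of_not_mem hi hx).symm,
          prod_insert fun h => hx (mem_of_mem_erase h)]
    rw [prod_insert hx, ih, prod_insert hx, sum_insert hx, erase_insert hx]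
    calc (c x + d x * ε) * (∏ i ∈ s, c i + (∑ i ∈ s, d i * ∏ j ∈ s.erase i, c j) * ε) =
          c x * ∏ i ∈ s, c i + (d x * ∏ i ∈ s, c i
            + c x * ∑ i ∈ s, d i * ∏ j ∈ s.erase i, c j) * ε
          + d x * (∑ i ∈ s, d i * ∏ j ∈ s.erase i, c j) * ε ^ 2 := by ring
      _ = _ := by
        rw [hε, mul_zero, add_zero, mul_sum]
        congr 3
        refine sum_congr rfl fun i hi => ?_
        rw [herase i hi, mul_left_comm]

end Algebra

noncomputable section

section Truncation

variable {R : Type*} [CommRing R] {a m : ℕ}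

variable (R a) in
abbrev TruncPowerSeries := R⟦X⟧ ⧸ Ideal.span {(X : R⟦X⟧) ^ (a + 1)}

variable (R a) in
abbrev modXPow : R⟦X⟧ →+* TruncPowerSeries R a := Ideal.Quotient.mk _

theorem modXPow_X_pow_eq_zero (hm : a < m) : modXPow R a (X ^ m) = 0 :=
  Ideal.Quotient.eq_zero_iff_mem.2 <| Ideal.mem_span_singleton.2 <| pow_dvd_pow X hm

theorem modXPow_X_pow_sq_eq_zero (ha : 0 < a) (hm : a ≤ m) : modXPow R a (X ^ m) ^ 2 = 0 := by
  rw [← map_pow, ← pow_mul]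
  exact modXPow_X_pow_eq_zero (by omega)

theorem coeff_eq_of_modXPow_eq {f g : R⟦X⟧} (h : modXPow R a f = modXPow R a g) (hm : m ≤ a) :
    coeff m f = coeff m g := by
  rw [Ideal.Quotient.eq, Ideal.mem_span_singleton, X_pow_dvd_iff] at h
  simpa [sub_eq_zero] using h m (by omega)

theorem modXPow_inv_one_sub_X_pow {K : Type*} [Field K] (ha : 0 < a) (hm : a ≤ m) :
    modXPow K a (1 - X ^ m)⁻¹ = 1 + modXPow K a (X ^ m) := by
  refine eq_one_add_of_one_sub_mul_eq_one (modXPow_X_pow_sq_eq_zero ha hm) ?_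
  rw [← map_one (modXPow K a), ← map_sub, ← map_mul, PowerSeries.mul_inv_cancel, map_one]
  simp [zero_pow (by omega : m ≠ 0)]

end Truncation

section LaurentExpansion

variable (K : Type*) [Field K]

/-- The expansion of `1/(1 - t^w)` at `t = 0`; for `w < 0` it uses
`1/(1 - t^(-v)) = 1 - 1/(1 - t^v)`. -/
def invOneSubXZPow (w : ℤ) : K⟦X⟧ :=
  if 0 < w then (1 - X ^ w.natAbs)⁻¹ else 1 - (1 - X ^ w.natAbs)⁻¹

variable {K}

theorem modXPow_invOneSubXZPow {a : ℕ} (ha : 0 < a) {w : ℤ} (hw : a ≤ |w|) :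
    modXPow K a (invOneSubXZPow K w) =
      ((if w < 0 then 0 else 1 : ℤ) : TruncPowerSeries K a)
        + ((if w = a then 1 else 0) - (if w = -a then 1 else 0) : ℤ) * modXPow K a (X ^ a) := by
  have hv : a ≤ w.natAbs := by rw [← Int.natCast_natAbs] at hw; omega
  have hXv : modXPow K a (X ^ w.natAbs) = if w.natAbs = a then modXPow K a (X ^ a) else 0 := by
    split_ifs with h
    · rw [h]
    · exact modXPow_X_pow_eq_zero (by omega)
  rw [invOneSubXZPow]
  rcases lt_or_gt_of_ne (show w ≠ 0 by omega) with hneg | hpos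
  · rw [if_neg (by omega), map_sub, map_one, modXPow_inv_one_sub_X_pow ha hv, hXv]
    split_ifs <;> first | omega | push_cast; ring
  · rw [if_pos hpos, modXPow_inv_one_sub_X_pow ha hv, hXv]
    split_ifs <;> first | omega | push_cast; ring

theorem coe_X_pow_eq_ofPowerSeries (m : ℕ) :
    ((RatFunc.X ^ m : RatFunc K) : K⸨X⸩) = ofPowerSeries ℤ K (X ^ m) := by
  simp

theorem coe_inv_one_sub_X_zpow {w : ℤ} (hw : w ≠ 0) :
    (((1 - RatFunc.X ^ w)⁻¹ : RatFunc K) : K⸨X⸩) = ofPowerSeries ℤ K (invOneSubXZPow K w) := by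
  have hZ :
      (1 - ofPowerSeries ℤ K (X ^ w.natAbs)) * ofPowerSeries ℤ K (1 - X ^ w.natAbs)⁻¹ = 1 := by
    rw [← map_one (ofPowerSeries ℤ K), ← map_sub, ← map_mul, PowerSeries.mul_inv_cancel, map_one]
    simp [zero_pow (Int.natAbs_ne_zero.2 hw)]
  rw [map_inv₀, map_sub, map_one, invOneSubXZPow]
  rcases hw.lt_or_gt with hneg | hpos
  · rw [show w = -(w.natAbs : ℤ) by omega, zpow_neg, zpow_natCast, map_inv₀,
      coe_X_pow_eq_ofPowerSeries, if_neg (by omega), map_sub, map_one, Int.natAbs_neg,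
      Int.natAbs_natCast]
    refine inv_one_sub_inv_eq_one_sub ?_ hZ
    rw [Ne, ← map_zero (ofPowerSeries ℤ K), ofPowerSeries_injective.eq_iff]
    exact pow_ne_zero _ X_ne_zero
  · rw [show w = (w.natAbs : ℤ) by omega, zpow_natCast, coe_X_pow_eq_ofPowerSeries,
      if_pos (by omega), Int.natAbs_natCast]
    exact inv_eq_of_mul_eq_one_right hZ

theorem RatFunc.X_zpow_ne_one {w : ℤ} (hw : w ≠ 0) : (RatFunc.X : RatFunc K) ^ w ≠ 1 := by
  intro h
  have := congrArg (fun f : RatFunc K => (f : K⸨X⸩).coeff w) h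
  simp [← RatFunc.single_zpow, hw] at this

theorem prod_div_prod_one_sub {F ι : Type*} [Field F] [Fintype ι] [DecidableEq ι] {x : ι → F}
    (hx : ∀ i, x i ≠ 1) (S : Finset ι) :
    (∏ i ∈ S, x i) / ∏ i, (1 - x i) = ∏ i, ((1 - x i)⁻¹ - if i ∈ S then 1 else 0) := by
  rw [div_eq_mul_inv, ← prod_inv_distrib,
    show ∏ i ∈ S, x i = ∏ i, if i ∈ S then x i else 1 by rw [prod_ite_mem, univ_inter],
    ← prod_mul_distrib]
  refine prod_congr rfl fun i _ => ?_
  have : 1 - x i ≠ 0 := sub_ne_zero.2 (hx i).symm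
  split_ifs
  · field_simp
    ring
  · ring

end LaurentExpansion

section Combinatorics

variable {ι : Type*} [DecidableEq ι]

theorem prod_indicator_sub_indicator (B S T : Finset ι) :
    ∏ i ∈ T, ((if i ∈ B then 0 else 1) - (if i ∈ S then 1 else 0) : ℤ) =
      if S ∩ T = B ∩ T then (-1) ^ #(B ∩ T) else 0 := by
  have hfactor : ∀ i, ((if i ∈ B then 0 else 1) - (if i ∈ S then 1 else 0) : ℤ) =
      (if i ∈ B then -1 else 1) * (if (i ∈ S ↔ i ∈ B) then 1 else 0) := by
    intro i
    by_cases hB : i ∈ B <;> by_cases hS : i ∈ S <;> simp [hB, hS]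
  have hiff : (∀ i ∈ T, (i ∈ S ↔ i ∈ B)) ↔ S ∩ T = B ∩ T := by
    simp only [Finset.ext_iff, mem_inter]
    grind
  rw [prod_congr rfl fun i _ => hfactor i, prod_mul_distrib, prod_ite, prod_const, prod_const,
    one_pow, mul_one, prod_boole, filter_mem_eq_inter, inter_comm T B]
  simp only [hiff, mul_ite, mul_one, mul_zero]

theorem filter_erase_eq_filter_or {B : Finset ι} {j : ι} (hj : j ∉ B) (s : Finset (Finset ι)) :
    s.filter (fun S => S.erase j = B) = s.filter (fun S => S = B ∨ S = insert j B) := by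
  refine filter_congr fun S _ => ⟨fun h => ?_, ?_⟩
  · by_cases hjS : j ∈ S
    · exact .inr (by rw [← h, insert_erase hjS])
    · exact .inl (by rw [← h, erase_eq_of_notMem hjS])
  · rintro (rfl | rfl)
    · exact erase_eq_of_notMem hj
    · exact erase_insert hj

variable [Fintype ι]

theorem card_filter_powersetCard_erase_eq {B : Finset ι} {j : ι} (hj : j ∉ B) (k : ℕ) :
    #((powersetCard k univ).filter fun S => S.erase j = B) =
      (if #B = k then 1 else 0) + (if #B + 1 = k then 1 else 0) := by
  rw [filter_erase_eq_filter_or hj, filter_or, card_union_of_disjoint]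
  · simp only [filter_eq', mem_powersetCard, subset_univ, true_and, card_insert_of_notMem hj]
    split_ifs <;> simp
  · refine disjoint_filter.2 fun S _ hB hB' => ?_
    exact hj (hB ▸ hB' ▸ mem_insert_self j B)

theorem sum_powersetCard_prod_erase (B : Finset ι) (j : ι) (k : ℕ) :
    ∑ S ∈ powersetCard k univ,
        ∏ i ∈ univ.erase j, ((if i ∈ B then 0 else 1) - (if i ∈ S then 1 else 0) : ℤ) =
      (-1) ^ k *
        ((if #(B.erase j) = k then 1 else 0) - (if #(B.erase j) + 1 = k then 1 else 0)) := by
  have hprod : ∀ S : Finset ι, ∏ i ∈ univ.erase j,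
      ((if i ∈ B then 0 else 1) - (if i ∈ S then 1 else 0) : ℤ) =
        if S.erase j = B.erase j then (-1) ^ #(B.erase j) else 0 := fun S => by
    simp only [prod_indicator_sub_indicator, inter_erase, inter_univ]
  rw [sum_congr rfl fun S _ => hprod S, ← sum_filter, sum_const,
    card_filter_powersetCard_erase_eq (notMem_erase j B)]
  split_ifs with h1 h2 h2 <;> try omega
  · simp [h1]
  · simp [← h2, pow_succ]
  · simp

end Combinatorics

section Weights

variable {ι : Type*} [Fintype ι]

def weightIndex (w : ι → ℤ) : ℕ := #(univ.filter fun j => w j < 0)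

def weightMult (w : ι → ℤ) (m : ℤ) : ℕ := #(univ.filter fun j => w j = m)

def weightDefect (a : ℤ) (w : ι → ℤ) (k : ℤ) : ℤ :=
  (if (weightIndex w : ℤ) = k then (weightMult w a : ℤ) else 0) -
    (if (weightIndex w : ℤ) = k + 1 then (weightMult w (-a) : ℤ) else 0)

theorem weightDefect_neg_one {a : ℤ} (ha : 0 < a) (w : ι → ℤ) : weightDefect a w (-1) = 0 := by
  have hmult : weightIndex w = 0 → weightMult w (-a) = 0 := by
    simp only [weightIndex, weightMult, card_eq_zero, filter_eq_empty_iff]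
    exact fun h j _ hj => h (mem_univ j) (by omega)
  rw [weightDefect, if_neg (by omega), show (-1 : ℤ) + 1 = 0 by norm_num]
  split_ifs with h
  · simp [hmult (by omega)]
  · simp

theorem sum_weightDefect_eq_sub {P : Type*} [Fintype P] (a : ℤ) (w : P → ι → ℤ) (k : ℕ) :
    ∑ p, weightDefect a (w p) k =
      ((∑ p ∈ univ.filter (fun p => weightIndex (w p) = k), weightMult (w p) a : ℕ) : ℤ) -
        (∑ p ∈ univ.filter (fun p => weightIndex (w p) = k + 1), weightMult (w p) (-a) : ℕ) := by
  simp only [weightDefect, sum_sub_distrib, sum_filter]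
  push_cast
  simp only [Nat.cast_inj, ← Nat.cast_succ]

end Weights

section LiIdentities

variable (K : Type*) [Field K] {ι : Type*} [Fintype ι] [DecidableEq ι]

def liSummand (w : ι → ℤ) (k : ℕ) : RatFunc K :=
  (∑ S ∈ powersetCard k univ, ∏ j ∈ S, RatFunc.X ^ w j) / ∏ j, (1 - RatFunc.X ^ w j)

def liSeries (w : ι → ℤ) (k : ℕ) : K⟦X⟧ :=
  ∑ S ∈ powersetCard k univ, ∏ j, (invOneSubXZPow K (w j) - if j ∈ S then 1 else 0)

variable {K}

theorem coe_liSummand {w : ι → ℤ} (hw : ∀ j, w j ≠ 0) (k : ℕ) :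
    (liSummand K w k : K⸨X⸩) = ofPowerSeries ℤ K (liSeries K w k) := by
  rw [liSummand, sum_div, liSeries, map_sum, map_sum]
  refine sum_congr rfl fun S _ => ?_
  rw [prod_div_prod_one_sub (x := fun j => RatFunc.X ^ w j) fun j => RatFunc.X_zpow_ne_one (hw j),
    map_prod, map_prod]
  refine prod_congr rfl fun j _ => ?_
  rw [map_sub, map_sub, coe_inv_one_sub_X_zpow (hw j)]
  split_ifs <;> simp

theorem sum_mul_indicator_eq_weightDefect {a : ℤ} (ha : 0 < a) (w : ι → ℤ) (k : ℤ) :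
    ∑ j, ((if w j = a then 1 else 0) - (if w j = -a then 1 else 0)) *
        (if (#((univ.filter fun i => w i < 0).erase j) : ℤ) = k then 1 else 0) =
      weightDefect a w k := by
  have hpos : ∀ j, (if w j = a then 1 else 0 : ℤ) *
      (if (#((univ.filter fun i => w i < 0).erase j) : ℤ) = k then 1 else 0) =
        (if w j = a then 1 else 0) * (if (weightIndex w : ℤ) = k then 1 else 0) := fun j => by
    by_cases hj : w j = a
    · rw [erase_eq_of_notMem (by simp [hj, ha.le]), weightIndex]
    · simp [hj]
  have hneg : ∀ j, (if w j = -a then 1 else 0 : ℤ) *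
      (if (#((univ.filter fun i => w i < 0).erase j) : ℤ) = k then 1 else 0) =
        (if w j = -a then 1 else 0) * (if (weightIndex w : ℤ) = k + 1 then 1 else 0) :=
    fun j => by
      by_cases hj : w j = -a
      · have hcard := card_erase_add_one (s := univ.filter fun i => w i < 0) (a := j)
          (by simp [hj, ha])
        rw [weightIndex, ← hcard]
        push_cast
        simp
      · simp [hj]
  rw [sum_congr rfl fun j _ => by rw [sub_mul, hpos j, hneg j], sum_sub_distrib, ← sum_mul,
    ← sum_mul, sum_boole, sum_boole, weightDefect, weightMult, weightMult]
  split_ifs <;> simp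

theorem modXPow_liSeries {a : ℕ} (ha : 0 < a) {w : ι → ℤ} (hw : ∀ j, (a : ℤ) ≤ |w j|) (k : ℕ) :
    ∃ z : ℤ, modXPow K a (liSeries K w k) = z +
      (((-1) ^ k * (weightDefect a w k - weightDefect a w (k - 1)) : ℤ) : TruncPowerSeries K a) *
        modXPow K a (X ^ a) := by
  set B := univ.filter fun i => w i < 0
  let c : Finset ι → ι → ℤ := fun S i => (if i ∈ B then 0 else 1) - (if i ∈ S then 1 else 0)
  let d : ι → ℤ := fun j => (if w j = a then 1 else 0) - (if w j = -a then 1 else 0)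
  have hfactor : ∀ (S : Finset ι) j,
      modXPow K a (invOneSubXZPow K (w j) - if j ∈ S then 1 else 0) =
        (c S j : TruncPowerSeries K a) + (d j : TruncPowerSeries K a) * modXPow K a (X ^ a) := by
    intro S j
    rw [map_sub, modXPow_invOneSubXZPow ha (hw j), apply_ite (modXPow K a), map_one, map_zero]
    simp only [c, d, B, mem_filter, mem_univ, true_and]
    push_cast
    ring
  have hcoeff : ∑ S ∈ powersetCard k univ, ∑ j, d j * ∏ i ∈ univ.erase j, c S i =
      (-1) ^ k * (weightDefect a w k - weightDefect a w (k - 1)) := by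
    rw [sum_comm, ← sum_mul_indicator_eq_weightDefect (by omega),
      ← sum_mul_indicator_eq_weightDefect (by omega), ← sum_sub_distrib, mul_sum]
    refine sum_congr rfl fun j _ => ?_
    rw [← mul_sum, sum_powersetCard_prod_erase]
    have : #(B.erase j) + 1 = k ↔ (#(B.erase j) : ℤ) = k - 1 := by omega
    simp only [this, Nat.cast_inj]
    ring
  have hε : modXPow K a (X ^ a) ^ 2 = 0 := modXPow_X_pow_sq_eq_zero ha le_rfl
  refine ⟨∑ S ∈ powersetCard k univ, ∏ j, c S j, ?_⟩
  simp only [liSeries, map_sum, map_prod, hfactor, prod_add_mul_of_sq_eq_zero hε,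
    sum_add_distrib, ← sum_mul, ← hcoeff]
  push_cast
  rfl

theorem intCast_eq_zero_of_modXPow_eq {R : Type*} [CommRing R] {a : ℕ} (ha : 0 < a) {x y z : ℤ}
    (h : (x : TruncPowerSeries R a) + y * modXPow R a (X ^ a) = z) : (y : R) = 0 := by
  have := coeff_eq_of_modXPow_eq (f := C (x : R) + C (y : R) * X ^ a) (g := C (z : R))
    (by simpa using h) le_rfl
  rwa [map_add, coeff_C, coeff_C_mul_X_pow, coeff_C, if_neg ha.ne', if_pos rfl, if_neg ha.ne',
    zero_add] at this

theorem sum_weightDefect_sub_eq_zero [CharZero K] {P : Type*} [Fintype P] {w : P → ι → ℤ}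
    {a : ℕ} (ha : 0 < a) (hw : ∀ p j, (a : ℤ) ≤ |w p j|) {k : ℕ} {z : ℤ}
    (h : ∑ p, liSummand K (w p) k = z) :
    ∑ p, (weightDefect a (w p) k - weightDefect a (w p) (k - 1)) = 0 := by
  have hw0 : ∀ p j, w p j ≠ 0 := fun p j h0 => by simpa [h0, ha.ne'] using hw p j
  have hseries : ∑ p, liSeries K (w p) k = z := ofPowerSeries_injective (Γ := ℤ) <| by
    rw [map_sum, map_intCast]
    simpa [coe_liSummand (hw0 _)] using congrArg (fun f : RatFunc K => (f : K⸨X⸩)) h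
  choose x hx using fun p => modXPow_liSeries (K := K) ha (hw p) k
  have hmod := congrArg (modXPow K a) hseries
  rw [map_sum, map_intCast] at hmod
  simp only [hx, sum_add_distrib, ← sum_mul] at hmod
  have hcoeff := intCast_eq_zero_of_modXPow_eq ha (x := ∑ p, x p)
    (y := ∑ p, (-1) ^ k * (weightDefect a (w p) k - weightDefect a (w p) (k - 1)))
    (by exact_mod_cast hmod)
  rw [Int.cast_eq_zero, ← mul_sum] at hcoeff
  exact (mul_eq_zero.1 hcoeff).resolve_left (pow_ne_zero _ (by norm_num))

end LiIdentities

end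

theorem li_identities_imply_weight_matching_general
    (n : ℕ) (a : ℤ) (ha : 0 < a)
    (P : Type*) [Fintype P] (w : P → Fin n → ℤ)
    (hw : ∀ p j, w p j ≠ 0 ∧ a ≤ |w p j|)
    (hLi : ∀ k ≤ n,
      ∑ p : P,
          (∑ S ∈ (univ : Finset (Fin n)).powersetCard k,
              ∏ j ∈ S, (RatFunc.X : RatFunc ℚ) ^ (w p j)) /
            ∏ j : Fin n, (1 - (RatFunc.X : RatFunc ℚ) ^ (w p j))
        = (-1) ^ k *
            (((univ : Finset P).filter fun p =>
                ((univ : Finset (Fin n)).filter fun j => w p j < 0).card = k).card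
              : RatFunc ℚ)) :
    ∀ k < n,
      ∑ p ∈ (univ : Finset P).filter
          (fun p => ((univ : Finset (Fin n)).filter fun j => w p j < 0).card = k),
          ((univ : Finset (Fin n)).filter fun j => w p j = a).card
        = ∑ p ∈ (univ : Finset P).filter
            (fun p => ((univ : Finset (Fin n)).filter fun j => w p j < 0).card = k + 1),
            ((univ : Finset (Fin n)).filter fun j => w p j = -a).card := by
  lift a to ℕ using ha.le
  have hstep : ∀ k ≤ n, ∑ p, weightDefect a (w p) k = ∑ p, weightDefect a (w p) (k - 1) :=
    fun k hk => by
      rw [← sub_eq_zero, ← sum_sub_distrib]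
      refine sum_weightDefect_sub_eq_zero (K := ℚ) (by omega) (fun p j => (hw p j).2)
        (z := (-1) ^ k * #(univ.filter fun p => weightIndex (w p) = k)) ((hLi k hk).trans ?_)
      push_cast
      rfl
  have hzero : ∀ k ≤ n, ∑ p, weightDefect a (w p) k = 0 := by
    intro k hk
    induction k with
    | zero =>
      rw [hstep 0 hk, Nat.cast_zero, zero_sub]
      simp [weightDefect_neg_one (a := (a : ℤ)) (by omega)]
    | succ k ih =>
      rw [hstep (k + 1) hk, Nat.cast_succ, add_sub_cancel_right]
      exact ih (by omega)
  intro k hk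
  have hdefect := hzero k hk.le
  rwa [sum_weightDefect_eq_sub, sub_eq_zero, Nat.cast_inj] at hdefect

/-- the combinatorial core of Proposition 2.2.  The weight data
`w : P → Fin n → ℤ` at the points of `P` consist of nonzero integers of absolute
value at least `a > 0`.  `(univ.filter fun j => w p j < 0).card` is the index
`λ_p`, and the Li identities are assumed in the field `ℚ(t) = RatFunc ℚ`, with
`t = RatFunc.X` and `e_k` the `k`-th elementary symmetric polynomial (the sum of
products over `k`-element subsets).  Conclusion: for every `k ∈ {0, …, n-1}`,
the number of occurrences of the weight `a` at points of index `k` equals the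
number of occurrences of `-a` at points of index `k+1`. -/
theorem li_identities_imply_weight_matching
    (n : ℕ) (hn : 1 ≤ n) (a : ℤ) (ha : 0 < a)
    (P : Type*) [Fintype P] (w : P → Fin n → ℤ)
    (hw : ∀ p j, w p j ≠ 0 ∧ a ≤ |w p j|)
    (hLi : ∀ k ≤ n,
      ∑ p : P,
          (∑ S ∈ (univ : Finset (Fin n)).powersetCard k,
              ∏ j ∈ S, (RatFunc.X : RatFunc ℚ) ^ (w p j)) /
            ∏ j : Fin n, (1 - (RatFunc.X : RatFunc ℚ) ^ (w p j))
        = (-1) ^ k *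
            (((univ : Finset P).filter fun p =>
                ((univ : Finset (Fin n)).filter fun j => w p j < 0).card = k).card
              : RatFunc ℚ)) :
    ∀ k < n,
      ∑ p ∈ (univ : Finset P).filter
          (fun p => ((univ : Finset (Fin n)).filter fun j => w p j < 0).card = k),
          ((univ : Finset (Fin n)).filter fun j => w p j = a).card
        = ∑ p ∈ (univ : Finset P).filter
            (fun p => ((univ : Finset (Fin n)).filter fun j => w p j < 0).card = k + 1),
            ((univ : Finset (Fin n)).filter fun j => w p j = -a).card :=
  li_identities_imply_weight_matching_general n a ha P w hw hLi
end

section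
/- Let E be a finite set with maps i, t : E → Fin 5 (a directed multigraph on five vertices labelled 0,1,2,3,4). Assume: (1) for each vertex v, the number of edges e with t(e) = v equals v, and the number of edges e with i(e) = v equals 4 − v; (2) there are no self-loops, i.e. i(e) ≠ t(e) for every edge e; (3) every edge e with t(e) = 1 satisfies i(e) = 0; (4) every edge e with i(e) = 3 satisfies t(e) = 4. Then for every edge e, i(e) < t(e). In particular, for any strictly decreasing function Γ : Fin 5 → ℤ one has Γ(i(e)) > Γ(t(e)) for every edge e. (This is the combinatorial core of the proof of Theorem 3.8: the multigraph describing a Hamiltonian S¹-action on a closed 8-manifold with exactly 5 fixed points, where the fixed point of Morse index 2v is the vertex v, satisfies these hypotheses, and the conclusion yields the positivity property (P₀⁺).) -/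
open Finset

/-! Vertex `0` receives no edge and vertex `4` emits none, so an edge `a → b` has `a ≤ 3`,
`b ≥ 1` and `a ≠ b`. A backward edge would then be one of `2 → 1`, `3 → 1`, `3 → 2`, all of
which are excluded by the conditions at vertices `1` and `3`. -/

lemma lt_of_ne_four_of_ne_zero (a b : Fin 5) (ha : a ≠ 4) (hb : b ≠ 0) (hab : a ≠ b)
    (h1 : b = 1 → a = 0) (h3 : a = 3 → b = 4) : a < b := by
  revert a b
  decide

/-- the combinatorial core of the proof of Theorem 3.8.  A directed
multigraph on the five vertices `Fin 5` (vertex `v` corresponding to a fixed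
point of Morse index `2v`) with edge set `E` and initial/terminal maps
`i, t : E → Fin 5` such that the in-degree of `v` is `v` and the out-degree of
`v` is `4 - v`, with no self-loops, every edge into vertex `1` starting at `0`,
and every edge out of vertex `3` ending at `4`, satisfies `i e < t e` for every
edge; in particular any strictly decreasing `Γ : Fin 5 → ℤ` satisfies
`Γ (i e) > Γ (t e)` for every edge. -/
theorem multigraph_edges_increase
    (E : Type*) [Fintype E] (i t : E → Fin 5)
    (hin : ∀ v : Fin 5, ((univ : Finset E).filter fun e => t e = v).card = (v : ℕ))
    (hout : ∀ v : Fin 5, ((univ : Finset E).filter fun e => i e = v).card = 4 - (v : ℕ))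
    (hloop : ∀ e : E, i e ≠ t e)
    (h1 : ∀ e : E, t e = 1 → i e = 0)
    (h3 : ∀ e : E, i e = 3 → t e = 4) :
    (∀ e : E, i e < t e) ∧
      ∀ Γ : Fin 5 → ℤ, StrictAnti Γ → ∀ e : E, Γ (i e) > Γ (t e) := by
  have no_in_zero : ∀ e, t e ≠ 0 := by
    simpa using card_filter_eq_zero_iff.mp (hin 0)
  have no_out_four : ∀ e, i e ≠ 4 := by
    simpa using card_filter_eq_zero_iff.mp (hout 4)
  have forward (e : E) : i e < t e :=
    lt_of_ne_four_of_ne_zero _ _ (no_out_four e) (no_in_zero e) (hloop e) (h1 e) (h3 e)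
  exact ⟨forward, fun Γ hΓ e => hΓ (forward e)⟩
end

section
/- Suppose the weight data satisfy the Li identities. Then for every k ∈ {0, …, n}, equation (key) holds: ∑_{p : λ_p = k} (ν_p(−a) + ν_p(a)) = ∑_{p : λ_p = k−1} ν_p(a) + ∑_{p : λ_p = k+1} ν_p(−a), where a sum over an empty index set is 0 (in particular the first sum on the right-hand side is 0 when k = 0). -/
/-!
For `w < 0` one has `t^w / (1 - t^w) = -1 / (1 - t^|w|)` and
`1 / (1 - t^w) = -t^|w| / (1 - t^|w|)`, so the `p`-th summand of the `k`-th Li identity equals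
`(-1)^λ_p N_p / D_p` with the polynomials `N_p = ∑_{#S = k} t^(∑_{j ∈ S ∆ Neg_p} |w_pj|)` and
`D_p = ∏_j (1 - t^|w_pj|)`, where `Neg_p` is the set of negative positions.

Since every `|w_pj| ≥ a`, modulo `t^(a+1)` the denominator is the unit
`1 - (ν_p(-a) + ν_p(a)) t^a`, and in the numerator only `S = Neg_p` and the sets differing from
`Neg_p` in a single position of weight `±a` survive:
`N_p ≡ [λ_p = k] + ([λ_p = k + 1] ν_p(-a) + [λ_p = k - 1] ν_p(a)) t^a`.
Reading the Li identity in `ℚ[t] ⧸ (t^(a+1))` and comparing coefficients of `t^a` gives (key),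
the signs `(-1)^λ_p = -(-1)^k` for `λ_p = k ± 1` producing the two sums on the right.
-/

open Finset Polynomial
open scoped symmDiff

theorem ite_zpow_div_one_sub_zpow {K : Type*} [Field K] {x : K} (hx : x ≠ 0) (b : Prop)
    [Decidable b] {z : ℤ} (hz : z ≠ 0) :
    (if b then x ^ z else 1) / (1 - x ^ z) =
      (if z < 0 then -1 else 1) *
        ((if Xor b (z < 0) then x ^ z.natAbs else 1) / (1 - x ^ z.natAbs)) := by
  -- if `x ^ |z| = 1`, both sides are `0` by the convention `y / 0 = 0`
  rcases hz.lt_or_gt with hz | hz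
  · have hy : x ^ z.natAbs ≠ 0 := pow_ne_zero _ hx
    have hzy : x ^ z = (x ^ z.natAbs)⁻¹ := by
      rw [← zpow_natCast, ← zpow_neg, Int.ofNat_natAbs_of_nonpos hz.le, neg_neg]
    rw [hzy]
    generalize x ^ z.natAbs = y at hy ⊢
    by_cases h1 : y = 1
    · subst h1; simp
    have h1' : 1 - y ≠ 0 := sub_ne_zero.mpr (Ne.symm h1)
    by_cases hb : b <;> simp [hb, hz] <;> field_simp <;> ring
  · have hzy : x ^ z = x ^ z.natAbs := by
      rw [← zpow_natCast, Int.natAbs_of_nonneg hz.le]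
    simp [hzy, hz.not_gt, xor_def]

theorem prod_zpow_div_prod_one_sub_zpow {ι K : Type*} [Fintype ι] [DecidableEq ι] [Field K]
    {x : K} (hx : x ≠ 0) {v : ι → ℤ} (hv : ∀ j, v j ≠ 0) (S : Finset ι) :
    (∏ j ∈ S, x ^ v j) / ∏ j, (1 - x ^ v j) =
      (-1) ^ #{j | v j < 0} *
        ((∏ j ∈ S ∆ ({j | v j < 0} : Finset ι), x ^ (v j).natAbs) /
          ∏ j, (1 - x ^ (v j).natAbs)) := by
  have prod_eq_prod_ite (T : Finset ι) (f : ι → K) :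
      ∏ j ∈ T, f j = ∏ j, if j ∈ T then f j else 1 := by
    rw [prod_ite_mem, univ_inter]
  rw [prod_eq_prod_ite S, prod_eq_prod_ite (S ∆ _), ← prod_div_distrib, ← prod_div_distrib,
    ← prod_const, prod_filter, ← prod_mul_distrib]
  refine prod_congr rfl fun j _ => ?_
  rw [ite_zpow_div_one_sub_zpow hx _ (hv j)]
  simp only [mem_symmDiff, mem_filter, mem_univ, true_and]
  rfl

section SquareZero

variable {ι R : Type*} [CommRing R] {u : ι → R}

theorem add_mul_mul_one_add_mul {ε : R} (hε : ε * ε = 0) (a b c : R) :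
    (a + b * ε) * (1 + c * ε) = a + (b + a * c) * ε := by
  linear_combination b * c * hε

theorem prod_eq_zero_of_one_lt_card (hu : ∀ i j, u i * u j = 0) {s : Finset ι}
    (hs : 1 < #s) : ∏ i ∈ s, u i = 0 := by
  classical
  obtain ⟨i, hi, j, hj, hij⟩ := one_lt_card.mp hs
  rw [← mul_prod_erase s u hi, ← mul_prod_erase _ u (mem_erase.mpr ⟨hij.symm, hj⟩),
    ← mul_assoc, hu, zero_mul]

theorem prod_one_sub_of_mul_eq_zero (hu : ∀ i j, u i * u j = 0) (s : Finset ι) :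
    ∏ i ∈ s, (1 - u i) = 1 - ∑ i ∈ s, u i := by
  induction s using Finset.cons_induction with
  | empty => simp
  | cons a s ha ih =>
    have hcross : u a * ∑ i ∈ s, u i = 0 := by
      rw [mul_sum]
      exact sum_eq_zero fun i _ => hu a i
    rw [prod_cons, sum_cons, ih]
    linear_combination hcross

theorem prod_eq_ite_add_sum_ite [Fintype ι] [DecidableEq ι] (hu : ∀ i j, u i * u j = 0)
    (s : Finset ι) :
    ∏ i ∈ s, u i = (if s = ∅ then 1 else 0) + ∑ j, if s = {j} then u j else 0 := by
  rcases Nat.lt_or_ge 1 #s with hs | hs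
  · have hne : s ≠ ∅ := by rintro rfl; simp at hs
    have hns : ∀ j, s ≠ {j} := by rintro j rfl; simp at hs
    simp [prod_eq_zero_of_one_lt_card hu hs, hne, hns]
  · rcases Nat.le_one_iff_eq_zero_or_eq_one.mp hs with hs | hs
    · simp [card_eq_zero.mp hs]
    · obtain ⟨a, rfl⟩ := card_eq_one.mp hs
      simp

theorem card_singleton_symmDiff [DecidableEq ι] (j : ι) (N : Finset ι) :
    #({j} ∆ N) = if j ∈ N then #N - 1 else #N + 1 := by
  split_ifs with hj
  · rw [← card_erase_of_mem hj]
    congr 1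
    ext i
    by_cases hi : i = j <;> simp [mem_symmDiff, hi, hj]
  · rw [← card_insert_of_notMem hj]
    congr 1
    ext i
    by_cases hi : i = j <;> simp [mem_symmDiff, hi, hj]

theorem sum_powersetCard_prod_symmDiff [Fintype ι] [DecidableEq ι]
    (hu : ∀ i j, u i * u j = 0) (N : Finset ι) (k : ℕ) :
    ∑ S ∈ powersetCard k univ, ∏ i ∈ S ∆ N, u i =
      (if #N = k then 1 else 0) + (if #N = k + 1 then ∑ i ∈ N, u i else 0) +
        (if #N + 1 = k then ∑ i ∈ Nᶜ, u i else 0) := by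
  -- substitute `D = S ∆ N`: only `D = ∅` and the singletons `D = {j}` contribute
  have hS : ∀ S D : Finset ι, S ∆ N = D ↔ S = D ∆ N := fun S D => by
    constructor <;> rintro rfl <;> simp [symmDiff_symmDiff_cancel_right]
  simp_rw [prod_eq_ite_add_sum_ite hu, sum_add_distrib, hS, ← bot_eq_empty, bot_symmDiff]
  rw [sum_comm]
  simp only [sum_ite_eq', mem_powersetCard, subset_univ, true_and, card_singleton_symmDiff]
  have hin : ∀ j ∈ N, (if j ∈ N then #N - 1 else #N + 1) = k ↔ #N = k + 1 := fun j hj => by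
    have := card_pos.mpr ⟨j, hj⟩
    rw [if_pos hj]
    omega
  have hout : ∀ j ∈ Nᶜ, (if j ∈ N then #N - 1 else #N + 1) = k ↔ #N + 1 = k :=
    fun j hj => by rw [if_neg (mem_compl.mp hj)]
  rw [add_assoc, ← sum_add_sum_compl N, sum_congr rfl fun j hj => if_congr (hin j hj) rfl rfl,
    sum_congr rfl fun j hj => if_congr (hout j hj) rfl rfl, sum_ite_irrel, sum_ite_irrel]
  simp only [sum_const_zero]

theorem pow_eq_ite_of_pow_succ_eq_zero {x : R} {A : ℕ} (hx : x ^ (A + 1) = 0) {m : ℕ}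
    (hm : A ≤ m) :
    x ^ m = if m = A then x ^ A else 0 := by
  split_ifs with h
  · rw [h]
  · exact pow_eq_zero_of_le (by omega) hx

theorem pow_natAbs_mul_pow_natAbs_eq_zero {x : R} {A : ℕ} (hx : x ^ (A + 1) = 0) (hA : 0 < A)
    {v : ι → ℤ} (hv : ∀ j, A ≤ (v j).natAbs) (i j : ι) :
    x ^ (v i).natAbs * x ^ (v j).natAbs = 0 := by
  rw [← pow_add]
  exact pow_eq_zero_of_le (by have := hv i; have := hv j; omega) hx

end SquareZero

theorem sum_map_mul_eq_of_sum_div_eq {ι A K R : Type*} [CommRing A] [Field K] [Algebra A K]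
    [CommRing R] [Nontrivial R] (hinj : Function.Injective (algebraMap A K)) (ψ : A →+* R)
    (s : Finset ι) {N D : ι → A} {E : ι → R} {M : A} (hE : ∀ i ∈ s, ψ (D i) * E i = 1)
    (h : ∑ i ∈ s, algebraMap A K (N i) / algebraMap A K (D i) = algebraMap A K M) :
    ∑ i ∈ s, ψ (N i) * E i = ψ M := by
  classical
  have hD : ∀ i ∈ s, algebraMap A K (D i) ≠ 0 := fun i hi h0 => by
    have := hE i hi
    rw [(map_eq_zero_iff _ hinj).mp h0, map_zero, zero_mul] at this
    exact zero_ne_one this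
  have hcleared : ∑ i ∈ s, N i * ∏ j ∈ s.erase i, D j = M * ∏ j ∈ s, D j := by
    apply hinj
    simp only [map_sum, map_mul, map_prod, ← h, sum_mul]
    refine sum_congr rfl fun i hi => ?_
    rw [← mul_prod_erase s _ hi]
    field_simp [hD i hi]
  calc ∑ i ∈ s, ψ (N i) * E i
      = ψ (∑ i ∈ s, N i * ∏ j ∈ s.erase i, D j) * ∏ j ∈ s, E j := by
        simp only [map_sum, map_mul, map_prod, sum_mul]
        refine sum_congr rfl fun i hi => ?_
        have hrest : ∏ j ∈ s.erase i, (ψ (D j) * E j) = 1 :=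
          prod_eq_one fun j hj => hE j (mem_of_mem_erase hj)
        rw [prod_mul_distrib] at hrest
        rw [← mul_prod_erase s E hi]
        linear_combination -(ψ (N i) * E i) * hrest
    _ = ψ M := by
        rw [hcleared, map_mul, map_prod, mul_assoc, ← prod_mul_distrib, prod_eq_one hE, mul_one]

section WeightPolynomials

variable {ι : Type*} [Fintype ι]

noncomputable def liNumerator [DecidableEq ι] (k : ℕ) (v : ι → ℤ) : ℚ[X] :=
  ∑ S ∈ powersetCard k univ, ∏ j ∈ S ∆ ({j | v j < 0} : Finset ι), X ^ (v j).natAbs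

noncomputable def liDenominator (v : ι → ℤ) : ℚ[X] :=
  ∏ j, (1 - X ^ (v j).natAbs)

theorem sum_powersetCard_div_eq_liNumerator_div [DecidableEq ι] {v : ι → ℤ}
    (hv : ∀ j, v j ≠ 0) (k : ℕ) :
    (∑ S ∈ powersetCard k univ, ∏ j ∈ S, (RatFunc.X : RatFunc ℚ) ^ v j) /
        ∏ j, (1 - (RatFunc.X : RatFunc ℚ) ^ v j) =
      algebraMap ℚ[X] (RatFunc ℚ) ((-1) ^ #{j | v j < 0} * liNumerator k v) /
        algebraMap ℚ[X] (RatFunc ℚ) (liDenominator v) := by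
  simp only [liNumerator, liDenominator, map_mul, map_pow, map_neg, map_one, map_sum, map_prod,
    map_sub, RatFunc.algebraMap_X, sum_div, mul_sum, mul_div_assoc]
  exact sum_congr rfl fun S _ => prod_zpow_div_prod_one_sub_zpow RatFunc.X_ne_zero hv S

variable {R : Type*} [CommRing R] {x : R} {A : ℕ} {v : ι → ℤ}

theorem sum_pow_natAbs_eq (hx : x ^ (A + 1) = 0) (hv : ∀ j, A ≤ (v j).natAbs)
    (T : Finset ι) {c : ℤ} (hc : ∀ j, j ∈ T ∧ (v j).natAbs = A ↔ v j = c) :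
    ∑ j ∈ T, x ^ (v j).natAbs = #{j | v j = c} * x ^ A := by
  rw [sum_congr rfl fun j _ => pow_eq_ite_of_pow_succ_eq_zero hx (hv j), ← sum_filter,
    sum_const, nsmul_eq_mul]
  congr 3
  ext j
  simp [hc]

theorem sum_neg_pow_natAbs_eq (hx : x ^ (A + 1) = 0) (hA : 0 < A)
    (hv : ∀ j, A ≤ (v j).natAbs) :
    ∑ j ∈ {j | v j < 0}, x ^ (v j).natAbs = #{j | v j = -A} * x ^ A :=
  sum_pow_natAbs_eq hx hv _ fun j => by simp; omega

theorem sum_compl_neg_pow_natAbs_eq [DecidableEq ι] (hx : x ^ (A + 1) = 0) (hA : 0 < A)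
    (hv : ∀ j, A ≤ (v j).natAbs) :
    ∑ j ∈ ({j | v j < 0} : Finset ι)ᶜ, x ^ (v j).natAbs = #{j | v j = A} * x ^ A :=
  sum_pow_natAbs_eq hx hv _ fun j => by simp; omega

variable {ψ : ℚ[X] →+* R}

theorem map_liDenominator (hψ : ψ X ^ (A + 1) = 0) (hA : 0 < A)
    (hv : ∀ j, A ≤ (v j).natAbs) :
    ψ (liDenominator v) = 1 - (#{j | v j = -A} + #{j | v j = A}) * ψ X ^ A := by
  classical
  simp only [liDenominator, map_prod, map_sub, map_one, map_pow]
  rw [prod_one_sub_of_mul_eq_zero (pow_natAbs_mul_pow_natAbs_eq_zero hψ hA hv),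
    ← sum_add_sum_compl {j | v j < 0}, sum_neg_pow_natAbs_eq hψ hA hv,
    sum_compl_neg_pow_natAbs_eq hψ hA hv, add_mul]

theorem map_liNumerator [DecidableEq ι] (hψ : ψ X ^ (A + 1) = 0) (hA : 0 < A)
    (hv : ∀ j, A ≤ (v j).natAbs) (k : ℕ) :
    ψ (liNumerator k v) = (if #{j | v j < 0} = k then 1 else 0) +
      ((if #{j | v j < 0} = k + 1 then #{j | v j = -A} else 0) +
        (if #{j | v j < 0} + 1 = k then #{j | v j = A} else 0) : ℕ) * ψ X ^ A := by
  simp only [liNumerator, map_sum, map_prod, map_pow]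
  rw [sum_powersetCard_prod_symmDiff (pow_natAbs_mul_pow_natAbs_eq_zero hψ hA hv),
    sum_neg_pow_natAbs_eq hψ hA hv, sum_compl_neg_pow_natAbs_eq hψ hA hv]
  push_cast
  split_ifs <;> ring

end WeightPolynomials

theorem nontrivial_quotient_span_X_pow {R : Type*} [CommRing R] [Nontrivial R] {m : ℕ}
    (hm : m ≠ 0) : Nontrivial (R[X] ⧸ Ideal.span {(X : R[X]) ^ m}) :=
  Ideal.Quotient.nontrivial_iff.mpr <| by
    rw [Ne, Ideal.span_singleton_eq_top, isUnit_pow_iff hm]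
    exact not_isUnit_X

theorem eq_of_intCast_add_mul_mk_X_pow_eq {A : ℕ} (hA : 0 < A) {c d c' d' : ℤ}
    (h : ((c : ℚ[X] ⧸ Ideal.span {(X : ℚ[X]) ^ (A + 1)}) +
        (d : ℚ[X] ⧸ Ideal.span {(X : ℚ[X]) ^ (A + 1)}) * Ideal.Quotient.mk _ X ^ A) =
      (c' : ℚ[X] ⧸ Ideal.span {(X : ℚ[X]) ^ (A + 1)}) +
        (d' : ℚ[X] ⧸ Ideal.span {(X : ℚ[X]) ^ (A + 1)}) * Ideal.Quotient.mk _ X ^ A) :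
    d = d' := by
  have hdvd : (X : ℚ[X]) ^ (A + 1) ∣ ((c : ℚ[X]) + (d : ℚ[X]) * X ^ A) -
      ((c' : ℚ[X]) + (d' : ℚ[X]) * X ^ A) := by
    rw [← Ideal.mem_span_singleton, ← Ideal.Quotient.eq]
    simpa using h
  have hcoeff := X_pow_dvd_iff.mp hdvd A (by omega)
  simp only [← C_eq_intCast, coeff_sub, coeff_add, coeff_C, coeff_C_mul_X_pow, if_pos,
    if_neg hA.ne', zero_add] at hcoeff
  exact_mod_cast sub_eq_zero.mp hcoeff

theorem li_identity_coeff_X_pow {ι P : Type*} [Fintype ι] [DecidableEq ι] [Fintype P]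
    {w : P → ι → ℤ} {A : ℕ} (hA : 0 < A) (hw : ∀ p j, w p j ≠ 0 ∧ A ≤ (w p j).natAbs) {k : ℕ}
    (hLi : ∑ p, (∑ S ∈ powersetCard k univ, ∏ j ∈ S, (RatFunc.X : RatFunc ℚ) ^ w p j) /
        ∏ j, (1 - (RatFunc.X : RatFunc ℚ) ^ w p j) =
      (-1) ^ k * (#{p | #{j | w p j < 0} = k} : RatFunc ℚ)) :
    ∑ p, (-1 : ℤ) ^ #{j | w p j < 0} *
      ((if #{j | w p j < 0} = k + 1 then #{j | w p j = -A} else 0) +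
        (if #{j | w p j < 0} + 1 = k then #{j | w p j = A} else 0) +
        (if #{j | w p j < 0} = k then #{j | w p j = -A} + #{j | w p j = A} else 0) : ℕ) = 0 := by
  set I := Ideal.span {(X : ℚ[X]) ^ (A + 1)}
  have : Nontrivial (ℚ[X] ⧸ I) := nontrivial_quotient_span_X_pow (Nat.succ_ne_zero A)
  have hX : Ideal.Quotient.mk I X ^ (A + 1) = 0 := by
    rw [← map_pow]
    exact Ideal.Quotient.mk_singleton_self _
  have hε : Ideal.Quotient.mk I X ^ A * Ideal.Quotient.mk I X ^ A = 0 := by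
    rw [← pow_add]
    exact pow_eq_zero_of_le (by omega) hX
  have hv := fun p j => (hw p j).2
  have hmain := sum_map_mul_eq_of_sum_div_eq (RatFunc.algebraMap_injective ℚ)
    (Ideal.Quotient.mk I) univ (N := fun p => (-1) ^ #{j | w p j < 0} * liNumerator k (w p))
    (D := fun p => liDenominator (w p)) (M := (-1) ^ k * (#{p | #{j | w p j < 0} = k} : ℚ[X]))
    (E := fun p => 1 + (#{j | w p j = -A} + #{j | w p j = A} : ℕ) * Ideal.Quotient.mk I X ^ A)
    (fun p _ => by
      rw [map_liDenominator hX hA (hv p)]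
      push_cast
      linear_combination (-(#{j | w p j = -A} + #{j | w p j = A} : ℚ[X] ⧸ I) ^ 2) * hε)
    (by
      simp only [← sum_powersetCard_div_eq_liNumerator_div fun j => (hw _ j).1, hLi]
      simp)
  simp only [map_mul, map_pow, map_neg, map_one, map_natCast, map_liNumerator hX hA (hv _),
    mul_assoc, add_mul_mul_one_add_mul hε] at hmain
  refine eq_of_intCast_add_mul_mk_X_pow_eq hA
    (c := ∑ p, (-1) ^ #{j | w p j < 0} * if #{j | w p j < 0} = k then 1 else 0)
    (c' := (-1) ^ k * #{p | #{j | w p j < 0} = k}) (d' := 0) ?_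
  push_cast
  rw [zero_mul, add_zero, ← hmain, sum_mul, ← sum_add_distrib]
  refine sum_congr rfl fun p _ => ?_
  split_ifs <;> push_cast <;> ring

theorem sum_eq_of_sum_neg_one_pow_mul_eq_zero {P : Type*} [Fintype P] (lam x y : P → ℕ)
    (k : ℕ)
    (h : ∑ p, (-1 : ℤ) ^ lam p *
      ((if lam p = k + 1 then x p else 0) + (if lam p + 1 = k then y p else 0) +
        (if lam p = k then x p + y p else 0) : ℕ) = 0) :
    ∑ p ∈ {p | lam p = k}, (x p + y p) =
      ∑ p ∈ {p | lam p + 1 = k}, y p + ∑ p ∈ {p | lam p = k + 1}, x p := by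
  have sum_sign (s : Finset P) (f : P → ℕ) (e : ℤ)
      (he : ∀ p ∈ s, (-1 : ℤ) ^ lam p = e) :
      ∑ p ∈ s, (-1 : ℤ) ^ lam p * f p = e * ∑ p ∈ s, (f p : ℤ) := by
    rw [mul_sum]
    exact sum_congr rfl fun p hp => by rw [he p hp]
  have hup := sum_sign {p | lam p = k + 1} x (-(-1) ^ k) fun p hp => by
    rw [(mem_filter.mp hp).2, pow_succ, mul_neg_one]
  have hdown := sum_sign {p | lam p + 1 = k} y (-(-1) ^ k) fun p hp => by
    rw [← (mem_filter.mp hp).2, pow_succ, mul_neg_one, neg_neg]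
  have hsame (f : P → ℕ) := sum_sign {p | lam p = k} f ((-1) ^ k) fun p hp => by
    rw [(mem_filter.mp hp).2]
  push_cast at h
  simp only [mul_add, mul_ite, mul_zero, sum_add_distrib, ← sum_filter, hup, hdown, hsame] at h
  have hfactor : (-1 : ℤ) ^ k *
      (∑ p ∈ {p | lam p = k}, (x p : ℤ) + ∑ p ∈ {p | lam p = k}, (y p : ℤ) -
        ∑ p ∈ {p | lam p + 1 = k}, (y p : ℤ) - ∑ p ∈ {p | lam p = k + 1}, (x p : ℤ)) = 0 := by
    linear_combination h
  have hcancel := (mul_eq_zero.mp hfactor).resolve_left (pow_ne_zero _ (by norm_num))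
  apply @Nat.cast_injective ℤ
  push_cast
  rw [sum_add_distrib]
  linear_combination hcancel

theorem li_identities_imply_key_equation_general
    (n : ℕ) (a : ℤ) (ha : 0 < a)
    (P : Type*) [Fintype P] (w : P → Fin n → ℤ)
    (hw : ∀ p j, w p j ≠ 0 ∧ a ≤ |w p j|)
    (hLi : ∀ k ≤ n,
      ∑ p : P,
          (∑ S ∈ (univ : Finset (Fin n)).powersetCard k,
              ∏ j ∈ S, (RatFunc.X : RatFunc ℚ) ^ (w p j)) /
            ∏ j : Fin n, (1 - (RatFunc.X : RatFunc ℚ) ^ (w p j))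
        = (-1) ^ k *
            (((univ : Finset P).filter fun p =>
                ((univ : Finset (Fin n)).filter fun j => w p j < 0).card = k).card
              : RatFunc ℚ)) :
    ∀ k ≤ n,
      ∑ p ∈ (univ : Finset P).filter
          (fun p => ((univ : Finset (Fin n)).filter fun j => w p j < 0).card = k),
          (((univ : Finset (Fin n)).filter fun j => w p j = -a).card +
            ((univ : Finset (Fin n)).filter fun j => w p j = a).card)
        = (∑ p ∈ (univ : Finset P).filter
              (fun p => ((univ : Finset (Fin n)).filter fun j => w p j < 0).card + 1 = k),
              ((univ : Finset (Fin n)).filter fun j => w p j = a).card) +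
          ∑ p ∈ (univ : Finset P).filter
              (fun p => ((univ : Finset (Fin n)).filter fun j => w p j < 0).card = k + 1),
              ((univ : Finset (Fin n)).filter fun j => w p j = -a).card := by
  intro k hk
  lift a to ℕ using ha.le
  have hw' : ∀ p j, w p j ≠ 0 ∧ a ≤ (w p j).natAbs := fun p j =>
    ⟨(hw p j).1, by have := (hw p j).2; rw [Int.abs_eq_natAbs] at this; exact_mod_cast this⟩
  exact sum_eq_of_sum_neg_one_pow_mul_eq_zero _ _ _ k
    (li_identity_coeff_X_pow (Int.natCast_pos.mp ha) hw' (hLi k hk))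

/-- equation (key) in the proof of Proposition 2.2.  With the same
setup as Statement 0 (weights `w : P → Fin n → ℤ`, nonzero, of absolute value at
least `a > 0`, satisfying the Li identities in `ℚ(t)`), for every `k ∈ {0,…,n}`
one has
`∑_{λ_p = k} (ν_p(-a) + ν_p(a)) = ∑_{λ_p = k-1} ν_p(a) + ∑_{λ_p = k+1} ν_p(-a)`,
where the sum over `λ_p = k - 1` is encoded as the sum over `λ_p + 1 = k`
(hence empty when `k = 0`). -/
theorem li_identities_imply_key_equation
    (n : ℕ) (hn : 1 ≤ n) (a : ℤ) (ha : 0 < a)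
    (P : Type*) [Fintype P] (w : P → Fin n → ℤ)
    (hw : ∀ p j, w p j ≠ 0 ∧ a ≤ |w p j|)
    (hLi : ∀ k ≤ n,
      ∑ p : P,
          (∑ S ∈ (univ : Finset (Fin n)).powersetCard k,
              ∏ j ∈ S, (RatFunc.X : RatFunc ℚ) ^ (w p j)) /
            ∏ j : Fin n, (1 - (RatFunc.X : RatFunc ℚ) ^ (w p j))
        = (-1) ^ k *
            (((univ : Finset P).filter fun p =>
                ((univ : Finset (Fin n)).filter fun j => w p j < 0).card = k).card
              : RatFunc ℚ)) :
    ∀ k ≤ n,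
      ∑ p ∈ (univ : Finset P).filter
          (fun p => ((univ : Finset (Fin n)).filter fun j => w p j < 0).card = k),
          (((univ : Finset (Fin n)).filter fun j => w p j = -a).card +
            ((univ : Finset (Fin n)).filter fun j => w p j = a).card)
        = (∑ p ∈ (univ : Finset P).filter
              (fun p => ((univ : Finset (Fin n)).filter fun j => w p j < 0).card + 1 = k),
              ((univ : Finset (Fin n)).filter fun j => w p j = a).card) +
          ∑ p ∈ (univ : Finset P).filter
              (fun p => ((univ : Finset (Fin n)).filter fun j => w p j < 0).card = k + 1),
              ((univ : Finset (Fin n)).filter fun j => w p j = -a).card :=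
  li_identities_imply_key_equation_general n a ha P w hw hLi
end

section
/- Let a and n be positive integers, let w_1, …, w_n be nonzero integers each of absolute value at least a, let λ = #{j : w_j < 0}, let ν(a) = #{j : w_j = a} and ν(−a) = #{j : w_j = −a}, and fix k ∈ {0, …, n}. In the ring ℤ⟦t⟧ of formal power series over ℤ, the element ∏_{j=1}^n (1 − t^{|w_j|}) has constant coefficient 1 and hence is a unit; let G = F · (∏_{j=1}^n (1 − t^{|w_j|}))^{−1}, where F ∈ ℤ[t] is the polynomial whose coefficients agree with those of the Laurent polynomial e_k(t^{w_1}, …, t^{w_n}) · ∏_{j : w_j < 0} t^{−w_j}. Then: the coefficient of t^0 in G is 1 if λ = k and 0 otherwise; the coefficient of t^i in G is 0 for every i with 0 < i < a; and the coefficient of t^a in G equals ν(a) if λ = k − 1, equals ν(a) + ν(−a) if λ = k, equals ν(−a) if λ = k + 1, and equals 0 otherwise. -/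
/-!
Write `N = {j | w_j < 0}`. The monomial of `e_k` indexed by `S` contributes `t^{e(S)}` to `F`, where
`e(S) = ∑_{j ∈ S} w_j - ∑_{j ∈ N} w_j = ∑_{j ∈ S ∆ N} |w_j|`. Since every `|w_j| ≥ a > 0`,
`e(S) < a` forces `S = N` and `e(S) = a` forces `S = N ∆ {j}` with `|w_j| = a`, so modulo `t^{a+1}`
`F ≡ [λ = k] + (ν(a) [λ + 1 = k] + ν(-a) [λ = k + 1]) t^a`, while
`∏_j (1 - t^{|w_j|}) ≡ 1 - (ν(a) + ν(-a)) t^a`. Dividing gives the first `a + 1` coefficients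
of `G`.
-/

open Finset LaurentPolynomial symmDiff

namespace Finset

variable {ι : Type*}

theorem sum_eq_iff_eq_empty_of_lt {s : Finset ι} {f : ι → ℕ} {a i : ℕ}
    (hf : ∀ j ∈ s, a ≤ f j) (hi : i < a) : ∑ j ∈ s, f j = i ↔ s = ∅ ∧ i = 0 := by
  constructor
  · intro h
    obtain rfl : s = ∅ := by
      by_contra hs
      obtain ⟨j, hj⟩ := nonempty_iff_ne_empty.mpr hs
      have := single_le_sum (fun j _ => Nat.zero_le (f j)) hj
      linarith [hf j hj]
    exact ⟨rfl, by simpa using h.symm⟩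
  · rintro ⟨rfl, rfl⟩
    rfl

theorem sum_eq_iff_eq_singleton [DecidableEq ι] {s : Finset ι} {f : ι → ℕ} {a : ℕ}
    (ha : 0 < a) (hf : ∀ j ∈ s, a ≤ f j) : ∑ j ∈ s, f j = a ↔ ∃ j, s = {j} ∧ f j = a := by
  constructor
  · intro h
    obtain ⟨j, hj⟩ : s.Nonempty := by
      by_contra hs
      rw [not_nonempty_iff_eq_empty.mp hs, sum_empty] at h
      omega
    rw [← add_sum_erase s f hj] at h
    have hrest : ∑ i ∈ s.erase j, f i = 0 := by have := hf j hj; omega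
    have herase := ((sum_eq_iff_eq_empty_of_lt (fun i hi => hf i (mem_of_mem_erase hi)) ha).mp
      hrest).1
    refine ⟨j, ?_, by omega⟩
    simpa [erase_eq_empty_iff, ne_empty_of_mem hj] using herase
  · rintro ⟨j, rfl, hj⟩
    simpa using hj

theorem sum_sub_sum_eq_sum_symmDiff_natAbs [DecidableEq ι] (w : ι → ℤ) (S N : Finset ι)
    (hN : ∀ j ∈ N, w j ≤ 0) (hS : ∀ j ∈ S \ N, 0 ≤ w j) :
    ∑ j ∈ S, w j - ∑ j ∈ N, w j = ∑ j ∈ S ∆ N, ((w j).natAbs : ℤ) := by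
  rw [← sum_sdiff_sub_sum_sdiff, Finset.symmDiff_def, sum_union disjoint_sdiff_sdiff,
    sub_eq_add_neg, ← sum_neg_distrib]
  congr 1
  · exact sum_congr rfl fun j hj => (Int.natCast_natAbs _).trans (abs_of_nonneg (hS j hj)) |>.symm
  · exact sum_congr rfl fun j hj =>
      ((Int.natCast_natAbs _).trans (abs_of_nonpos (hN j (mem_sdiff.mp hj).1))).symm

theorem card_symmDiff_singleton [DecidableEq ι] (N : Finset ι) (j : ι) :
    #(N ∆ {j}) = if j ∈ N then #N - 1 else #N + 1 := by
  split_ifs with hj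
  · rw [show N ∆ {j} = N.erase j by ext; grind [mem_symmDiff], card_erase_of_mem hj]
  · rw [show N ∆ {j} = insert j N by ext; grind [mem_symmDiff], card_insert_of_notMem hj]

theorem symmDiff_eq_singleton_iff [DecidableEq ι] {S N : Finset ι} {j : ι} :
    S ∆ N = {j} ↔ S = N ∆ {j} := by
  rw [← symmDiff_left_inj (b := N), symmDiff_symmDiff_cancel_right, symmDiff_comm N]

theorem card_filter_natAbs_eq (s : Finset ι) (w : ι → ℤ) {a : ℕ} (ha : 0 < a) :
    #{j ∈ s | (w j).natAbs = a} = #{j ∈ s | w j = a} + #{j ∈ s | w j = -a} := by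
  classical
  rw [← card_union_of_disjoint (disjoint_filter.mpr fun j _ h h' => by omega), ← filter_or]
  simp only [Int.natAbs_eq_iff]

end Finset

theorem pow_succ_dvd_prod_one_sub_pow_sub {R ι : Type*} [CommRing R] (x : R) {a : ℕ} (ha : 0 < a)
    (s : Finset ι) (m : ι → ℕ) (hm : ∀ j ∈ s, a ≤ m j) :
    x ^ (a + 1) ∣ ∏ j ∈ s, (1 - x ^ m j) - (1 - #{j ∈ s | m j = a} * x ^ a) := by
  classical
  obtain ⟨c, rfl⟩ : ∃ c, a = c + 1 := ⟨a - 1, by omega⟩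
  induction s using Finset.induction with
  | empty => simp
  | insert b s hb ih =>
    obtain ⟨Q, hQ⟩ := ih fun j hj => hm j (mem_insert_of_mem hj)
    rw [prod_insert hb, filter_insert]
    rcases (hm b (mem_insert_self b s)).eq_or_lt with hab | hab
    · rw [if_pos hab.symm, card_insert_of_notMem (by simp [hb]), ← hab]
      exact ⟨(1 - x ^ (c + 1)) * Q + #{j ∈ s | m j = c + 1} * x ^ c, by
        push_cast; linear_combination (1 - x ^ (c + 1)) * hQ⟩
    · rw [if_neg hab.ne']
      obtain ⟨r, hr⟩ := Nat.exists_eq_add_of_lt hab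
      exact ⟨(1 - x ^ m b) * Q - x ^ r * (1 - #{j ∈ s | m j = c + 1} * x ^ (c + 1)), by
        rw [hr]; linear_combination (1 - x ^ (c + 1 + r + 1)) * hQ⟩

namespace PowerSeries

theorem coeff_mul_of_X_pow_succ_dvd_sub {R : Type*} [CommRing R] {a i : ℕ} {c : R} {D : R⟦X⟧}
    (hD : X ^ (a + 1) ∣ D - (1 - C c * X ^ a)) (G : R⟦X⟧) (hi : i ≤ a) :
    coeff i (G * D) = coeff i G - if i = a then c * coeff 0 G else 0 := by
  obtain ⟨Q, hQ⟩ := hD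
  rw [show G * D = G - C c * (G * X ^ a) + G * Q * X ^ (a + 1) by
    linear_combination G * hQ]
  simp only [map_add, map_sub, coeff_C_mul, coeff_mul_X_pow']
  by_cases h : i = a
  · simp [h]
  · rw [if_neg (by omega), if_neg (by omega), if_neg h]; simp

end PowerSeries

namespace LaurentPolynomial

theorem prod_T {R ι : Type*} [CommSemiring R] (s : Finset ι) (f : ι → ℤ) :
    ∏ j ∈ s, (T (f j) : R[T;T⁻¹]) = T (∑ j ∈ s, f j) := by
  simp only [T, AddMonoidAlgebra.prod_single, Finset.prod_const_one]

end LaurentPolynomial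

section LocalNumerator

variable {R ι : Type*} [CommSemiring R] [Fintype ι] (w : ι → ℤ) (k : ℕ)

noncomputable def localNumerator : R[T;T⁻¹] :=
  (∑ S ∈ (univ : Finset ι).powersetCard k, ∏ j ∈ S, T (w j)) *
    ∏ j ∈ (univ : Finset ι).filter fun j => w j < 0, T (-(w j))

variable [DecidableEq ι]

theorem localNumerator_eq_sum_T :
    (localNumerator w k : R[T;T⁻¹]) =
      ∑ S ∈ univ.powersetCard k, T (∑ j ∈ S ∆ ({j | w j < 0} : Finset ι), (w j).natAbs : ℕ) := by
  rw [localNumerator, sum_mul]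
  refine sum_congr rfl fun S _ => ?_
  rw [prod_T, prod_T, ← T_add, sum_neg_distrib, ← sub_eq_add_neg,
    sum_sub_sum_eq_sum_symmDiff_natAbs w S _ (fun j hj => (mem_filter.mp hj).2.le)
      (fun j hj => by simpa using (mem_sdiff.mp hj).2), Nat.cast_sum]

theorem coeff_localNumerator (i : ℕ) :
    (localNumerator w k : R[T;T⁻¹]).coeff i =
      #{S ∈ univ.powersetCard k | ∑ j ∈ S ∆ ({j | w j < 0} : Finset ι), (w j).natAbs = i} := by
  simp only [localNumerator_eq_sum_T, AddMonoidAlgebra.coeff_sum, Finsupp.finsetSum_apply,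
    T_apply, Nat.cast_inj, sum_boole]

variable {w} {a : ℕ}

theorem coeff_localNumerator_of_lt (hw : ∀ j, a ≤ (w j).natAbs) {i : ℕ} (hi : i < a) :
    (localNumerator w k : R[T;T⁻¹]).coeff i = if i = 0 ∧ #{j | w j < 0} = k then 1 else 0 := by
  simp only [coeff_localNumerator, sum_eq_iff_eq_empty_of_lt (fun j _ => hw j) hi,
    symmDiff_eq_empty]
  by_cases hi0 : i = 0
  · simp only [hi0, and_true, true_and, filter_eq', mem_powersetCard_univ]
    split_ifs <;> simp_all [eq_comm]
  · simp [hi0]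

theorem coeff_localNumerator_self (hw : ∀ j, a ≤ (w j).natAbs) (ha : 0 < a) :
    (localNumerator w k : R[T;T⁻¹]).coeff a =
      (if #{j | w j < 0} + 1 = k then (#{j | w j = a} : R) else 0) +
        if #{j | w j < 0} = k + 1 then (#{j | w j = -a} : R) else 0 := by
  simp only [coeff_localNumerator, sum_eq_iff_eq_singleton ha (fun j _ => hw j),
    symmDiff_eq_singleton_iff]
  set N : Finset ι := {j | w j < 0}
  have himage : ({S ∈ univ.powersetCard k | ∃ j, S = N ∆ {j} ∧ (w j).natAbs = a} :
        Finset (Finset ι)) =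
      ({j | (w j).natAbs = a ∧ #(N ∆ {j}) = k} : Finset ι).image (N ∆ {·}) := by
    ext S
    simp only [mem_filter, mem_powersetCard_univ, mem_image, mem_univ, true_and]
    grind
  have hsplit : ({j | (w j).natAbs = a ∧ #(N ∆ {j}) = k} : Finset ι) =
      ({j | w j = a ∧ #N + 1 = k} : Finset ι) ∪ ({j | w j = -a ∧ #N = k + 1} : Finset ι) := by
    ext j
    have hNpos : j ∈ N → 0 < #N := fun hj => card_pos.mpr ⟨j, hj⟩
    simp only [mem_filter, mem_union, mem_univ, true_and, card_symmDiff_singleton,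
      Int.natAbs_eq_iff, N] at hNpos ⊢
    split_ifs <;> omega
  rw [himage, card_image_of_injective _
      fun _ _ h => singleton_injective (symmDiff_right_injective N h),
    hsplit, card_union_of_disjoint (disjoint_filter.mpr fun j _ h h' => by omega), Nat.cast_add]
  congr 1 <;> split_ifs with h <;> simp [h]

end LocalNumerator

theorem power_series_local_contribution_coeffs_general
    (a : ℕ) (ha : 0 < a) (n : ℕ) (w : Fin n → ℤ)
    (hw : ∀ j, w j ≠ 0 ∧ (a : ℤ) ≤ |w j|) (k : ℕ)
    (F : Polynomial ℤ)
    (hF : ∀ i : ℕ, F.coeff i =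
      ((∑ S ∈ (univ : Finset (Fin n)).powersetCard k, ∏ j ∈ S, T (w j)) *
        ∏ j ∈ (univ : Finset (Fin n)).filter fun j => w j < 0,
          T (-(w j)) : LaurentPolynomial ℤ).coeff (i : ℤ)) :
    let lam : ℕ := ((univ : Finset (Fin n)).filter fun j => w j < 0).card
    let nua : ℤ := (((univ : Finset (Fin n)).filter fun j => w j = (a : ℤ)).card : ℤ)
    let numa : ℤ := (((univ : Finset (Fin n)).filter fun j => w j = -(a : ℤ)).card : ℤ)
    let D : PowerSeries ℤ := ∏ j : Fin n, (1 - (PowerSeries.X : PowerSeries ℤ) ^ (w j).natAbs)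
    let G : PowerSeries ℤ := (F : PowerSeries ℤ) * Ring.inverse D
    PowerSeries.constantCoeff D = 1 ∧ IsUnit D ∧
      (PowerSeries.coeff 0 G = if lam = k then 1 else 0) ∧
      (∀ i : ℕ, 0 < i → i < a → PowerSeries.coeff i G = 0) ∧
      ((lam + 1 = k → PowerSeries.coeff a G = nua) ∧
        (lam = k → PowerSeries.coeff a G = nua + numa) ∧
        (lam = k + 1 → PowerSeries.coeff a G = numa) ∧
        (lam + 1 ≠ k ∧ lam ≠ k ∧ lam ≠ k + 1 → PowerSeries.coeff a G = 0)) := by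
  intro lam nua numa D G
  have hwa : ∀ j, a ≤ (w j).natAbs := fun j => by
    exact_mod_cast Int.abs_eq_natAbs (w j) ▸ (hw j).2
  have hF' : ∀ i : ℕ, F.coeff i = (localNumerator w k : LaurentPolynomial ℤ).coeff i := hF
  have hD : (PowerSeries.X : PowerSeries ℤ) ^ (a + 1) ∣
      D - (1 - PowerSeries.C (nua + numa) * PowerSeries.X ^ a) := by
    have := pow_succ_dvd_prod_one_sub_pow_sub (PowerSeries.X : PowerSeries ℤ) ha univ _
      fun j _ => hwa j
    rwa [card_filter_natAbs_eq _ _ ha, ← map_natCast PowerSeries.C, Nat.cast_add] at this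
  have hD0 : PowerSeries.constantCoeff D = 1 := by
    simp [D, map_prod, fun j => (ha.trans_le (hwa j)).ne']
  have hDunit : IsUnit D := PowerSeries.isUnit_iff_constantCoeff.mpr (hD0 ▸ isUnit_one)
  have hGD : G * D = F := by rw [mul_assoc, Ring.inverse_mul_cancel _ hDunit, mul_one]
  have hGF (i : ℕ) (hi : i ≤ a) : F.coeff i =
      PowerSeries.coeff i G - if i = a then (nua + numa) * PowerSeries.coeff 0 G else 0 := by
    rw [← Polynomial.coeff_coe, ← hGD, PowerSeries.coeff_mul_of_X_pow_succ_dvd_sub hD G hi]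
  have hlow (i : ℕ) (hi : i < a) : PowerSeries.coeff i G = if i = 0 ∧ lam = k then 1 else 0 := by
    simpa [hi.ne, hF', coeff_localNumerator_of_lt k hwa hi] using (hGF i hi.le).symm
  have hG0 : PowerSeries.coeff 0 G = if lam = k then 1 else 0 := by simpa using hlow 0 ha
  have hGa := hGF a le_rfl
  rw [hF', coeff_localNumerator_self k hwa ha, if_pos rfl, hG0] at hGa
  change ((if lam + 1 = k then nua else 0) + if lam = k + 1 then numa else 0) =
    PowerSeries.coeff a G - (nua + numa) * (if lam = k then 1 else 0) at hGa
  refine ⟨hD0, hDunit, hG0, fun i hi hia => by simpa [hi.ne'] using hlow i hia, ?_⟩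
  refine ⟨?_, ?_, ?_, ?_⟩ <;> intro h <;> split_ifs at hGa <;> omega

/-- the low-order Taylor coefficients of the local contribution of
a fixed point of index `2λ` in the proof of Proposition 2.2.  Here
`w_1,…,w_n` are nonzero integers of absolute value at least `a > 0`,
`λ = #{j : w_j < 0}`, `ν(a) = #{j : w_j = a}`, `ν(-a) = #{j : w_j = -a}`,
and `k ≤ n`.  In `ℤ⟦t⟧`, the element `∏_j (1 - t^{|w_j|})` has constant
coefficient `1`, hence is a unit; `F ∈ ℤ[t]` is the polynomial whose
coefficients agree with those of the Laurent polynomial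
`e_k(t^{w_1},…,t^{w_n}) · ∏_{w_j<0} t^{-w_j}`, and
`G = F · (∏_j (1 - t^{|w_j|}))⁻¹`.  Then the coefficient of `t^0` in `G` is
`1` if `λ = k` and `0` otherwise, the coefficients of `t^i` for `0 < i < a`
vanish, and the coefficient of `t^a` in `G` is `ν(a)` if `λ = k - 1`, is
`ν(a) + ν(-a)` if `λ = k`, is `ν(-a)` if `λ = k + 1`, and is `0` otherwise. -/
theorem power_series_local_contribution_coeffs
    (a : ℕ) (ha : 0 < a) (n : ℕ) (hn : 0 < n) (w : Fin n → ℤ)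
    (hw : ∀ j, w j ≠ 0 ∧ (a : ℤ) ≤ |w j|) (k : ℕ) (hk : k ≤ n)
    (F : Polynomial ℤ)
    (hF : ∀ i : ℕ, F.coeff i =
      ((∑ S ∈ (univ : Finset (Fin n)).powersetCard k, ∏ j ∈ S, T (w j)) *
        ∏ j ∈ (univ : Finset (Fin n)).filter fun j => w j < 0,
          T (-(w j)) : LaurentPolynomial ℤ).coeff (i : ℤ)) :
    let lam : ℕ := ((univ : Finset (Fin n)).filter fun j => w j < 0).card
    let nua : ℤ := (((univ : Finset (Fin n)).filter fun j => w j = (a : ℤ)).card : ℤ)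
    let numa : ℤ := (((univ : Finset (Fin n)).filter fun j => w j = -(a : ℤ)).card : ℤ)
    let D : PowerSeries ℤ := ∏ j : Fin n, (1 - (PowerSeries.X : PowerSeries ℤ) ^ (w j).natAbs)
    let G : PowerSeries ℤ := (F : PowerSeries ℤ) * Ring.inverse D
    PowerSeries.constantCoeff D = 1 ∧ IsUnit D ∧
      (PowerSeries.coeff 0 G = if lam = k then 1 else 0) ∧
      (∀ i : ℕ, 0 < i → i < a → PowerSeries.coeff i G = 0) ∧
      ((lam + 1 = k → PowerSeries.coeff a G = nua) ∧
        (lam = k → PowerSeries.coeff a G = nua + numa) ∧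
        (lam = k + 1 → PowerSeries.coeff a G = numa) ∧
        (lam + 1 ≠ k ∧ lam ≠ k ∧ lam ≠ k + 1 → PowerSeries.coeff a G = 0)) :=
  power_series_local_contribution_coeffs_general a ha n w hw k F hF
end

section
/- Let a be a positive integer and let w be a finite multiset of nonzero integers, each of absolute value at least a. Let w⁻ denote the submultiset of negative elements of w. For any submultiset S of w, define D(S) = (∑_{x ∈ S} x) − (∑_{x ∈ w⁻} x). Then: (1) D(S) ≥ 0; (2) if S ≠ w⁻ then D(S) ≥ a; (3) if S ≠ w⁻ and the cardinality of S equals the cardinality of w⁻, then D(S) ≥ 2a. -/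
/-- the exponent estimate underlying the expansion of
`σ_k(t^{w_1},…,t^{w_n}) ∏_{w_j<0} t^{-w_j}` in the proof of Proposition 2.2.
Let `a > 0` and let `w` be a finite multiset of nonzero integers, each of
absolute value at least `a`.  Let `w⁻` be the submultiset of negative elements
of `w`.  For any submultiset `S ≤ w`, set `D(S) = (∑_{x ∈ S} x) - ∑_{x ∈ w⁻} x`.
Then `D(S) ≥ 0`; if `S ≠ w⁻` then `D(S) ≥ a`; and if moreover `|S| = |w⁻|`
then `D(S) ≥ 2a`. -/
theorem submultiset_exponent_estimate
    (a : ℤ) (ha : 0 < a) (w : Multiset ℤ)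
    (hw : ∀ x ∈ w, x ≠ 0 ∧ a ≤ |x|)
    (S : Multiset ℤ) (hS : S ≤ w) :
    0 ≤ S.sum - (w.filter fun x => x < 0).sum ∧
      (S ≠ (w.filter fun x => x < 0) →
        a ≤ S.sum - (w.filter fun x => x < 0).sum) ∧
      (S ≠ (w.filter fun x => x < 0) →
        Multiset.card S = Multiset.card (w.filter fun x => x < 0) →
        2 * a ≤ S.sum - (w.filter fun x => x < 0).sum) := by
  set N : Multiset ℤ := w.filter fun x => x < 0 with hN
  set Sn : Multiset ℤ := S.filter fun x => x < 0 with hSn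
  set Sp : Multiset ℤ := S.filter fun x => ¬ x < 0 with hSp
  have hSn_le : Sn ≤ N := Multiset.filter_le_filter _ hS
  have hSsplit : Sn + Sp = S := Multiset.filter_add_not _ S
  have hNsplit : Sn + (N - Sn) = N := by
    rw [add_comm]; exact tsub_add_cancel_of_le hSn_le
  have hsumN : Sn.sum + (N - Sn).sum = N.sum := by
    rw [← Multiset.sum_add, hNsplit]
  have hsumS : Sn.sum + Sp.sum = S.sum := by
    rw [← Multiset.sum_add, hSsplit]
  -- key rewriting of D
  have hD : S.sum - N.sum = Sp.sum - (N - Sn).sum := by linarith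
  -- bounds on the two parts
  have hSp_bound : (Multiset.card Sp : ℤ) * a ≤ Sp.sum := by
    have := Multiset.card_nsmul_le_sum (s := Sp) (a := a) ?_
    · simpa [nsmul_eq_mul] using this
    · intro x hx
      have hxS : x ∈ S := Multiset.mem_of_mem_filter hx
      have hxw : x ∈ w := Multiset.mem_of_le hS hxS
      obtain ⟨hx0, hxa⟩ := hw x hxw
      have : ¬ x < 0 := by
        have := Multiset.of_mem_filter hx; simpa using this
      have hxpos : 0 < x := lt_of_le_of_ne (not_lt.mp this) (Ne.symm hx0)
      rwa [abs_of_pos hxpos] at hxa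
  have hNSn_bound : (N - Sn).sum ≤ (Multiset.card (N - Sn) : ℤ) * (-a) := by
    have := Multiset.sum_le_card_nsmul (N - Sn) (-a) ?_
    · simpa [nsmul_eq_mul] using this
    · intro x hx
      have hxN : x ∈ N := Multiset.mem_of_le (tsub_le_self) hx
      have hxw : x ∈ w := Multiset.mem_of_mem_filter hxN
      obtain ⟨hx0, hxa⟩ := hw x hxw
      have hxneg : x < 0 := by
        have := Multiset.of_mem_filter hxN; simpa using this
      rw [abs_of_neg hxneg] at hxa
      linarith
  set m : ℕ := Multiset.card Sp
  set k : ℕ := Multiset.card (N - Sn)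
  have hmain : ((m + k : ℕ) : ℤ) * a ≤ S.sum - N.sum := by
    rw [hD]
    push_cast
    nlinarith [hSp_bound, hNSn_bound]
  -- if S ≠ N then m + k ≥ 1
  have hne : S ≠ N → 1 ≤ m + k := by
    intro hSne
    by_contra h
    have hm : m = 0 := by omega
    have hk : k = 0 := by omega
    have hSp0 : Sp = 0 := Multiset.card_eq_zero.mp hm
    have hk0 : (N - Sn) = 0 := Multiset.card_eq_zero.mp hk
    have : Sn = N := by
      have := hNsplit; rw [hk0, add_zero] at this; exact this
    apply hSne
    rw [← hSsplit, hSp0, add_zero, this]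
  refine ⟨?_, ?_, ?_⟩
  · have : (0 : ℤ) ≤ ((m + k : ℕ) : ℤ) * a := by positivity
    linarith
  · intro hSne
    have h1 := hne hSne
    have : (1 : ℤ) * a ≤ ((m + k : ℕ) : ℤ) * a := by
      apply mul_le_mul_of_nonneg_right _ ha.le
      exact_mod_cast h1
    linarith
  · intro hSne hcard
    have h1 := hne hSne
    -- card S = card Sn + m, card N = card Sn + k
    have hcS : Multiset.card S = Multiset.card Sn + m := by
      rw [← hSsplit, Multiset.card_add]
    have hcN : Multiset.card N = Multiset.card Sn + k := by
      rw [← hNsplit, Multiset.card_add]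
    have hmk : m = k := by omega
    have h2 : 2 ≤ m + k := by omega
    have : (2 : ℤ) * a ≤ ((m + k : ℕ) : ℤ) * a := by
      apply mul_le_mul_of_nonneg_right _ ha.le
      exact_mod_cast h2
    linarith
end
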